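/- arXiv:2604.16885 — 2 statements merged into one kernel-verified Lean document; each statement's English description precedes it below -/
import Mathlib

section
/- Let K₁, K₂ be positive definite Hermitian n×n matrices, k ∈ ℂⁿ, P > 0, and suppose (K₁⁻¹k)ᴴ K₂ (K₁⁻¹k) > P. Define g(λ) = ((K₁ + λK₂)⁻¹k)ᴴ K₂ ((K₁ + λK₂)⁻¹k) for λ ≥ 0. Then g is continuous and strictly decreasing on [0,∞) with g(0) > P and lim_{λ→∞} g(λ) = 0, so there exists a unique λ* > 0 with g(λ*) = P. -/
/-!
Write `M(λ) = K₁ + λK₂` and `v(λ) = M(λ)⁻¹k`, so that `g(λ) = v(λ)ᴴK₂v(λ)`. For `a < b` put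
`w = M(b)⁻¹K₂v(a)`; then `v(b) = v(a) - (b - a)w` and expanding the quadratic form gives
`g(b) = g(a) - 2(b - a)·wᴴK₁w - (b - a)(a + b)·wᴴK₂w < g(a)`.
For the limit, `vᴴk = vᴴK₁v + λ·vᴴK₂v`, and positivity of `K₁` at `K₁⁻¹k - 2v` bounds
`λ·g(λ) ≤ (K₁⁻¹k)ᴴk / 4`.
-/

open Matrix ComplexOrder Filter Topology Set

namespace QCQP

variable {ι : Type*}

section Pencil

variable (K₁ K₂ : Matrix ι ι ℂ)

def pencil (l : ℝ) : Matrix ι ι ℂ := K₁ + (l : ℂ) • K₂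

@[simp]
lemma pencil_zero : pencil K₁ K₂ 0 = K₁ := by simp [pencil]

lemma pencil_sub_smul (a b : ℝ) : pencil K₁ K₂ b - ((b - a : ℝ) : ℂ) • K₂ = pencil K₁ K₂ a := by
  simp only [pencil, Complex.ofReal_sub, sub_smul]
  abel

lemma posDef_pencil {K₁ K₂ : Matrix ι ι ℂ} (hK₁ : K₁.PosDef) (hK₂ : K₂.PosSemidef) {l : ℝ}
    (hl : 0 ≤ l) : (pencil K₁ K₂ l).PosDef :=
  hK₁.add_posSemidef (hK₂.smul (Complex.zero_le_real.mpr hl))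

end Pencil

variable [Fintype ι]

def quadForm (A : Matrix ι ι ℂ) (x : ι → ℂ) : ℝ := (star x ⬝ᵥ (A *ᵥ x)).re

lemma quadForm_nonneg {A : Matrix ι ι ℂ} (hA : A.PosSemidef) (x : ι → ℂ) : 0 ≤ quadForm A x :=
  hA.re_dotProduct_nonneg x

lemma quadForm_pos {A : Matrix ι ι ℂ} (hA : A.PosDef) {x : ι → ℂ} (hx : x ≠ 0) :
    0 < quadForm A x :=
  hA.re_dotProduct_pos hx

lemma continuous_quadForm (A : Matrix ι ι ℂ) : Continuous (quadForm A) :=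
  Complex.continuous_re.comp <|
    continuous_id.star.dotProduct (continuous_const.matrix_mulVec continuous_id)

lemma quadForm_sub_smul {A : Matrix ι ι ℂ} (hA : A.IsHermitian) (x w : ι → ℂ) (t : ℝ) :
    quadForm A (x - (t : ℂ) • w) =
      quadForm A x - 2 * t * (star w ⬝ᵥ (A *ᵥ x)).re + t ^ 2 * quadForm A w := by
  have hswap : star x ⬝ᵥ (A *ᵥ w) = star (star w ⬝ᵥ (A *ᵥ x)) := by
    rw [star_dotProduct, star_mulVec, hA.eq, ← dotProduct_mulVec]
  simp only [quadForm, star_sub, star_smul, Complex.star_def, Complex.conj_ofReal, mulVec_sub,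
    mulVec_smul, sub_dotProduct, dotProduct_sub, smul_dotProduct, dotProduct_smul, smul_eq_mul,
    hswap, Complex.sub_re, Complex.mul_re, Complex.ofReal_re, Complex.ofReal_im,
    Complex.conj_re]
  ring

lemma inv_mulVec_eq_of_mulVec_eq {R : Type*} [CommRing R] [DecidableEq ι] {M : Matrix ι ι R}
    (hM : IsUnit M.det) {x k : ι → R} (h : M *ᵥ x = k) : M⁻¹ *ᵥ k = x := by
  rw [← h, mulVec_mulVec, nonsing_inv_mul _ hM, one_mulVec]

lemma mulVec_inv_mulVec {R : Type*} [CommRing R] [DecidableEq ι] {M : Matrix ι ι R}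
    (hM : IsUnit M.det) (k : ι → R) :
    M *ᵥ (M⁻¹ *ᵥ k) = k := by
  rw [mulVec_mulVec, mul_nonsing_inv _ hM, one_mulVec]

lemma re_dotProduct_pencil_mulVec (K₁ K₂ : Matrix ι ι ℂ) (l : ℝ) (x : ι → ℂ) :
    (star x ⬝ᵥ (pencil K₁ K₂ l *ᵥ x)).re = quadForm K₁ x + l * quadForm K₂ x := by
  simp [pencil, quadForm, add_mulVec, smul_mulVec, dotProduct_add, dotProduct_smul]

lemma isUnit_det_pencil [DecidableEq ι] {K₁ K₂ : Matrix ι ι ℂ} (hK₁ : K₁.PosDef)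
    (hK₂ : K₂.PosSemidef) {l : ℝ} (hl : 0 ≤ l) : IsUnit (pencil K₁ K₂ l).det :=
  (posDef_pencil hK₁ hK₂ hl).det_pos.ne'.isUnit

variable [DecidableEq ι] {K₁ K₂ : Matrix ι ι ℂ} {k : ι → ℂ}

variable (K₁ K₂ k) in
noncomputable def powerFn (l : ℝ) : ℝ := quadForm K₂ ((pencil K₁ K₂ l)⁻¹ *ᵥ k)

lemma powerFn_zero : powerFn K₁ K₂ k 0 = quadForm K₂ (K₁⁻¹ *ᵥ k) := by
  simp [powerFn]

lemma powerFn_lt_of_lt (hK₁ : K₁.PosDef) (hK₂ : K₂.PosDef) (hk : k ≠ 0) {a b : ℝ}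
    (ha : 0 ≤ a) (hab : a < b) : powerFn K₁ K₂ k b < powerFn K₁ K₂ k a := by
  have hA := isUnit_det_pencil hK₁ hK₂.posSemidef ha
  have hB := isUnit_det_pencil hK₁ hK₂.posSemidef (ha.trans hab.le)
  set va := (pencil K₁ K₂ a)⁻¹ *ᵥ k
  set w := (pencil K₁ K₂ b)⁻¹ *ᵥ (K₂ *ᵥ va)
  have hBw : pencil K₁ K₂ b *ᵥ w = K₂ *ᵥ va := mulVec_inv_mulVec hB _
  have hvb : (pencil K₁ K₂ b)⁻¹ *ᵥ k = va - ((b - a : ℝ) : ℂ) • w := by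
    refine inv_mulVec_eq_of_mulVec_eq hB ?_
    rw [mulVec_sub, mulVec_smul, hBw, ← smul_mulVec, ← sub_mulVec, pencil_sub_smul]
    exact mulVec_inv_mulVec hA k
  have hva : va ≠ 0 := by
    have hAva : pencil K₁ K₂ a *ᵥ va = k := mulVec_inv_mulVec hA k
    rintro h
    exact hk (by rw [← hAva, h, mulVec_zero])
  have hw : w ≠ 0 := by
    rintro h
    have hK₂va : K₂ *ᵥ va = 0 := by rw [← hBw, h, mulVec_zero]
    have := quadForm_pos hK₂ hva
    simp [quadForm, hK₂va] at this
  have hcross : (star w ⬝ᵥ (K₂ *ᵥ va)).re = quadForm K₁ w + b * quadForm K₂ w := by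
    rw [← hBw, re_dotProduct_pencil_mulVec]
  have hexpand : powerFn K₁ K₂ k b = powerFn K₁ K₂ k a
      - 2 * (b - a) * quadForm K₁ w - (b - a) * (a + b) * quadForm K₂ w := by
    rw [powerFn, hvb, quadForm_sub_smul hK₂.isHermitian, hcross]
    simp only [powerFn]
    ring
  have h₁ : 0 < (b - a) * quadForm K₁ w := mul_pos (sub_pos.2 hab) (quadForm_pos hK₁ hw)
  have h₂ : 0 ≤ (b - a) * (a + b) * quadForm K₂ w :=
    mul_nonneg (mul_nonneg (sub_pos.2 hab).le (by linarith)) (quadForm_nonneg hK₂.posSemidef w)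
  linarith

lemma strictAntiOn_powerFn (hK₁ : K₁.PosDef) (hK₂ : K₂.PosDef) (hk : k ≠ 0) :
    StrictAntiOn (powerFn K₁ K₂ k) (Ici 0) :=
  fun _ ha _ _ hab => powerFn_lt_of_lt hK₁ hK₂ hk ha hab

lemma continuousOn_powerFn (hK₁ : K₁.PosDef) (hK₂ : K₂.PosSemidef) :
    ContinuousOn (powerFn K₁ K₂ k) (Ici 0) := by
  have hinv : ContinuousOn (fun l => (pencil K₁ K₂ l)⁻¹) (Ici 0) := by
    intro l hl
    have hdet : ContinuousAt Ring.inverse (pencil K₁ K₂ l).det := by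
      rw [Ring.inverse_eq_inv']
      exact continuousAt_inv₀ (isUnit_det_pencil hK₁ hK₂ hl).ne_zero
    refine ((continuousAt_matrix_inv _ hdet).comp ?_).continuousWithinAt
    exact (continuous_const.add (Complex.continuous_ofReal.smul continuous_const)).continuousAt
  exact (continuous_quadForm K₂).comp_continuousOn
    ((continuous_id.matrix_mulVec continuous_const).comp_continuousOn hinv)

lemma mul_powerFn_le (hK₁ : K₁.PosDef) (hK₂ : K₂.PosSemidef) {l : ℝ} (hl : 0 ≤ l) :
    l * powerFn K₁ K₂ k l ≤ quadForm K₁ (K₁⁻¹ *ᵥ k) / 4 := by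
  set v := (pencil K₁ K₂ l)⁻¹ *ᵥ k
  set u := K₁⁻¹ *ᵥ k
  have hMv : pencil K₁ K₂ l *ᵥ v = k := mulVec_inv_mulVec (isUnit_det_pencil hK₁ hK₂ hl) k
  have hK₁u : K₁ *ᵥ u = k := mulVec_inv_mulVec hK₁.det_pos.ne'.isUnit k
  have hvk : (star v ⬝ᵥ k).re = quadForm K₁ v + l * quadForm K₂ v := by
    rw [← hMv, re_dotProduct_pencil_mulVec]
  have := quadForm_nonneg hK₁.posSemidef (u - ((2 : ℝ) : ℂ) • v)
  rw [quadForm_sub_smul hK₁.isHermitian, hK₁u, hvk] at this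
  simp only [powerFn]
  linarith

lemma tendsto_powerFn_atTop (hK₁ : K₁.PosDef) (hK₂ : K₂.PosSemidef) :
    Tendsto (powerFn K₁ K₂ k) atTop (𝓝 0) := by
  refine tendsto_of_tendsto_of_tendsto_of_le_of_le' tendsto_const_nhds
    ((tendsto_const_nhds (x := quadForm K₁ (K₁⁻¹ *ᵥ k) / 4)).div_atTop tendsto_id)
    (Eventually.of_forall fun l => ?_) ((eventually_gt_atTop 0).mono fun l hl => ?_)
  · exact quadForm_nonneg hK₂ _
  · rw [id_eq, le_div_iff₀ hl, mul_comm]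
    exact mul_powerFn_le hK₁ hK₂ hl.le

end QCQP

lemma existsUnique_pos_eq_of_strictAntiOn {f : ℝ → ℝ} {L P : ℝ}
    (hcont : ContinuousOn f (Ici 0)) (hanti : StrictAntiOn f (Ici 0)) (h0 : P < f 0)
    (hlim : Tendsto f atTop (𝓝 L)) (hLP : L < P) : ∃! x, 0 < x ∧ f x = P := by
  obtain ⟨N, hNP, hN⟩ :=
    ((hlim.eventually (gt_mem_nhds hLP)).and (eventually_ge_atTop 0)).exists
  obtain ⟨x, hx, hfx⟩ := intermediate_value_Icc' hN (hcont.mono Icc_subset_Ici_self)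
    ⟨hNP.le, h0.le⟩
  have hx0 : 0 < x := hx.1.lt_of_ne (by rintro rfl; exact h0.ne' hfx)
  refine ⟨x, ⟨hx0, hfx⟩, fun y ⟨hy, hfy⟩ => ?_⟩
  exact hanti.injOn (mem_Ici.2 hy.le) (mem_Ici.2 hx0.le) (hfy.trans hfx.symm)

theorem stmt9 {n : ℕ} (K₁ K₂ : Matrix (Fin n) (Fin n) ℂ)
    (hK₁ : K₁.PosDef) (hK₂ : K₂.PosDef) (k : Fin n → ℂ) (P : ℝ) (hP : 0 < P)
    (hfeas : P < (star (K₁⁻¹ *ᵥ k) ⬝ᵥ (K₂ *ᵥ (K₁⁻¹ *ᵥ k))).re)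
    (g : ℝ → ℝ)
    (hg : ∀ lam : ℝ, g lam =
      (star ((K₁ + (lam : ℂ) • K₂)⁻¹ *ᵥ k) ⬝ᵥ
        (K₂ *ᵥ ((K₁ + (lam : ℂ) • K₂)⁻¹ *ᵥ k))).re) :
    ContinuousOn g (Set.Ici 0) ∧ StrictAntiOn g (Set.Ici 0) ∧ P < g 0 ∧
      Filter.Tendsto g Filter.atTop (nhds 0) ∧
      ∃! lam : ℝ, 0 < lam ∧ g lam = P := by
  obtain rfl : g = QCQP.powerFn K₁ K₂ k := funext hg
  have hg0 : P < QCQP.powerFn K₁ K₂ k 0 := by rwa [QCQP.powerFn_zero]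
  have hk : k ≠ 0 := by
    rintro rfl
    simp [QCQP.powerFn, QCQP.quadForm] at hg0
    linarith
  have hcont := QCQP.continuousOn_powerFn (k := k) hK₁ hK₂.posSemidef
  have hanti := QCQP.strictAntiOn_powerFn hK₁ hK₂ hk
  have hlim := QCQP.tendsto_powerFn_atTop (k := k) hK₁ hK₂.posSemidef
  exact ⟨hcont, hanti, hg0, hlim, existsUnique_pos_eq_of_strictAntiOn hcont hanti hg0 hlim hP⟩
end

section
/- Suppose the decoupled load satisfies Z_Aᴰ = −j Im(Z_AA) + Z₀ Re(Z_AA)^{1/2} Z_A⁻¹ Re(Z_AA)^{1/2} with Re(Z_AA) positive definite, Z_AA = Re(Z_AA) + j Im(Z_AA), and Γ_A = (Z_A + Z₀I)⁻¹(Z_A − Z₀I). Then (Z_Aᴰ + Z_AA)⁻¹ = (1/2) Re(Z_AA)^{-1/2} (Γ_A + I) Re(Z_AA)^{-1/2}, provided all indicated inverses exist. -/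
open Matrix

theorem stmt15 {M : ℕ} (Z0 : ℝ) (hZ0 : 0 < Z0)
    (Z_A Z_AA : Matrix (Fin M) (Fin M) ℂ)
    (Rm Im S : Matrix (Fin M) (Fin M) ℂ)
    (hR : ∀ i j, Rm i j = ((Z_AA i j).re : ℂ))
    (hIm : ∀ i j, Im i j = ((Z_AA i j).im : ℂ))
    (hRsq : S * S = Rm) (hSu : IsUnit S)
    (hZA : IsUnit Z_A) (hZAp : IsUnit (Z_A + (Z0 : ℂ) • 1))
    (Γ : Matrix (Fin M) (Fin M) ℂ)
    (hΓ : Γ = (Z_A + (Z0 : ℂ) • 1)⁻¹ * (Z_A - (Z0 : ℂ) • 1))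
    (ZAD : Matrix (Fin M) (Fin M) ℂ)
    (hZAD : ZAD = (-Complex.I) • Im + (Z0 : ℂ) • (S * Z_A⁻¹ * S))
    (hinv : IsUnit (ZAD + Z_AA)) :
    (ZAD + Z_AA)⁻¹ = (1 / 2 : ℂ) • (S⁻¹ * (Γ + 1) * S⁻¹) := by
  have hZAd : IsUnit Z_A.det := (Matrix.isUnit_iff_isUnit_det _).mp hZA
  have hZApd : IsUnit (Z_A + (Z0 : ℂ) • 1).det := (Matrix.isUnit_iff_isUnit_det _).mp hZAp
  have hZAA : Z_AA = Rm + Complex.I • Im := by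
    ext i j
    simp [hR, hIm, Matrix.add_apply, Matrix.smul_apply]
    rw [mul_comm]
    exact (Complex.re_add_im _).symm
  have h1 : Z_A⁻¹ * (Z_A + (Z0 : ℂ) • 1) = 1 + (Z0 : ℂ) • Z_A⁻¹ := by
    rw [mul_add, Matrix.nonsing_inv_mul _ hZAd]
    simp [Matrix.mul_smul]
  -- factor ZAD + Z_AA
  have hfac : ZAD + Z_AA = S * Z_A⁻¹ * (Z_A + (Z0 : ℂ) • 1) * S := by
    rw [Matrix.mul_assoc S Z_A⁻¹, h1]
    rw [hZAD, hZAA, ← hRsq]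
    rw [Matrix.mul_add, Matrix.add_mul, Matrix.mul_one]
    simp only [Matrix.mul_smul, Matrix.smul_mul, Matrix.mul_assoc]
    module
  have h2 : (Z_A - (Z0 : ℂ) • 1) + (Z_A + (Z0 : ℂ) • 1) = (2 : ℂ) • Z_A := by
    rw [two_smul]; abel
  have hG : Γ + 1 = (Z_A + (Z0 : ℂ) • 1)⁻¹ * ((2 : ℂ) • Z_A) := by
    calc Γ + 1 = (Z_A + (Z0 : ℂ) • 1)⁻¹ * (Z_A - (Z0 : ℂ) • 1)
          + (Z_A + (Z0 : ℂ) • 1)⁻¹ * (Z_A + (Z0 : ℂ) • 1) := by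
            rw [hΓ, Matrix.nonsing_inv_mul _ hZApd]
      _ = (Z_A + (Z0 : ℂ) • 1)⁻¹ * ((Z_A - (Z0 : ℂ) • 1) + (Z_A + (Z0 : ℂ) • 1)) := by
            exact (Matrix.mul_add _ _ _).symm
      _ = (Z_A + (Z0 : ℂ) • 1)⁻¹ * ((2 : ℂ) • Z_A) := by rw [h2]
  have hhalf : (1 / 2 : ℂ) • (Γ + 1) = (Z_A + (Z0 : ℂ) • 1)⁻¹ * Z_A := by
    rw [hG, Matrix.mul_smul, smul_smul]
    norm_num
  have hrhs : (1 / 2 : ℂ) • (S⁻¹ * (Γ + 1) * S⁻¹)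
      = S⁻¹ * ((Z_A + (Z0 : ℂ) • 1)⁻¹ * Z_A) * S⁻¹ := by
    rw [← hhalf, Matrix.mul_smul, Matrix.smul_mul]
  rw [hfac, Matrix.mul_inv_rev, Matrix.mul_inv_rev, Matrix.mul_inv_rev,
    Matrix.nonsing_inv_nonsing_inv _ hZAd, hrhs]
  simp [Matrix.mul_assoc]
end
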